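/- In the quasi-reversibility framework: if ‖Av_ε − f‖² + ‖Bv_ε‖² + ε(v_ε, v_ε − v)_H = 0 with Av = f, Bv = 0, where A, B are bounded linear operators from a Hilbert space H to Hilbert spaces, then ‖Av_ε − f‖² + ‖Bv_ε‖² ≤ ε‖v‖²_H. -/
import Mathlib


open scoped RealInnerProductSpace

/-- Abstract quasi-reversibility residual bound: if
`‖Avₑ − f‖² + ‖Bvₑ‖² + ε⟪vₑ, vₑ − v⟫ = 0` with `Av = f` and `Bv = 0`, then
`‖Avₑ − f‖² + ‖Bvₑ‖² ≤ ε‖v‖²`. -/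
theorem quasi_reversibility_residual {H Y₁ Y₂ : Type*} [NormedAddCommGroup H]
    [InnerProductSpace ℝ H]
    [NormedAddCommGroup Y₁] [NormedSpace ℝ Y₁]
    [NormedAddCommGroup Y₂] [NormedSpace ℝ Y₂]
    (A : H →L[ℝ] Y₁) (B : H →L[ℝ] Y₂) (v vε : H) (f : Y₁)
    (ε : ℝ) (hε : 0 < ε) (hAv : A v = f) (hBv : B v = 0)
    (heq : ‖A vε - f‖ ^ 2 + ‖B vε‖ ^ 2 + ε * ⟪vε, vε - v⟫ = 0) :
    ‖A vε - f‖ ^ 2 + ‖B vε‖ ^ 2 ≤ ε * ‖v‖ ^ 2 := by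
  have hsum : ‖A vε - f‖ ^ 2 + ‖B vε‖ ^ 2 = -(ε * ⟪vε, vε - v⟫) := by linarith
  have hip : ⟪vε, vε - v⟫ = ‖vε‖ ^ 2 - ⟪vε, v⟫ := by
    rw [inner_sub_right, real_inner_self_eq_norm_sq]
  have hcs : ⟪vε, v⟫ ≤ ‖vε‖ * ‖v‖ := real_inner_le_norm vε v
  have hnn : (0:ℝ) ≤ ‖A vε - f‖ ^ 2 + ‖B vε‖ ^ 2 := by positivity
  have hle : ⟪vε, vε - v⟫ ≤ 0 := by nlinarith
  have hvv : ‖vε‖ ≤ ‖v‖ := by nlinarith [norm_nonneg vε, norm_nonneg v]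
  have key : -⟪vε, vε - v⟫ ≤ ‖v‖ ^ 2 := by nlinarith [norm_nonneg vε]
  nlinarith
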